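/- Monotonicity used in the uniqueness proof for the power-law viscosity: for any two 3×3 real matrices D₁, D₂ with norm |A|² = (1/2) tr(Aᵀ A) and pairing A : B = tr(Aᵀ B), one has (|D₂|D₂ − |D₁|D₁) : (D₂ − D₁) ≥ (|D₂| + |D₁|)·(|D₂| − |D₁|)² ≥ 0. -/

import Mathlib

/-!
After vectorisation, `mpair` is twice a Euclidean inner product whose norm is `mnorm`, so the
inequality is the monotonicity of `x ↦ ‖x‖ • x` in a real inner product space: expanding,
`⟪‖y‖ • y - ‖x‖ • x, y - x⟫ = ‖y‖³ + ‖x‖³ - (‖x‖ + ‖y‖) ⟪x, y⟫`, and Cauchy–Schwarz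
`⟪x, y⟫ ≤ ‖x‖ ‖y‖` bounds this below by `(‖x‖ + ‖y‖) (‖y‖ - ‖x‖)²`.
-/

open Matrix

noncomputable def mpair (A B : Matrix (Fin 3) (Fin 3) ℝ) : ℝ := (Aᵀ * B).trace

noncomputable def mnorm (A : Matrix (Fin 3) (Fin 3) ℝ) : ℝ := Real.sqrt ((1 / 2) * mpair A A)

open RealInnerProductSpace

theorem real_inner_norm_smul_sub_norm_smul_sub_ge {E : Type*} [NormedAddCommGroup E]
    [InnerProductSpace ℝ E] (x y : E) :
    (‖y‖ + ‖x‖) * (‖y‖ - ‖x‖) ^ 2 ≤ ⟪‖y‖ • y - ‖x‖ • x, y - x⟫ := by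
  have hcs : ⟪x, y⟫ ≤ ‖x‖ * ‖y‖ := real_inner_le_norm x y
  have hexpand : ⟪‖y‖ • y - ‖x‖ • x, y - x⟫ = ‖y‖ ^ 3 + ‖x‖ ^ 3 - (‖y‖ + ‖x‖) * ⟪x, y⟫ := by
    simp only [inner_sub_left, inner_sub_right, real_inner_smul_left, real_inner_self_eq_norm_sq,
      real_inner_comm x y]
    ring
  rw [hexpand]
  nlinarith [add_nonneg (norm_nonneg x) (norm_nonneg y)]

namespace Matrix

variable {m n : Type*}

/-- The vectorisation of `A`, scaled by `1 / √2` so that its Euclidean norm is `mnorm A`. -/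
noncomputable def halfVec (A : Matrix m n ℝ) : EuclideanSpace ℝ (n × m) :=
  (√2)⁻¹ • WithLp.toLp 2 A.vec

theorem halfVec_sub (A B : Matrix m n ℝ) : halfVec (A - B) = halfVec A - halfVec B := by
  simp only [halfVec, vec_sub, WithLp.toLp_sub, smul_sub]

theorem halfVec_smul (c : ℝ) (A : Matrix m n ℝ) : halfVec (c • A) = c • halfVec A := by
  simp only [halfVec, vec_smul, WithLp.toLp_smul, smul_comm c]

theorem trace_transpose_mul_eq_two_mul_inner_halfVec [Fintype m] [Fintype n]
    (A B : Matrix m n ℝ) : (Aᵀ * B).trace = 2 * ⟪halfVec A, halfVec B⟫ := by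
  rw [halfVec, halfVec, real_inner_smul_left, real_inner_smul_right,
    EuclideanSpace.inner_toLp_toLp, star_trivial, dotProduct_comm, vec_dotProduct_vec,
    ← mul_assoc, ← mul_assoc, mul_assoc (2 : ℝ), ← mul_inv, Real.mul_self_sqrt zero_le_two,
    mul_inv_cancel₀ two_ne_zero, one_mul]

end Matrix

theorem mpair_eq_two_mul_inner (A B : Matrix (Fin 3) (Fin 3) ℝ) :
    mpair A B = 2 * ⟪A.halfVec, B.halfVec⟫ :=
  trace_transpose_mul_eq_two_mul_inner_halfVec A B

theorem mnorm_eq_norm_halfVec (A : Matrix (Fin 3) (Fin 3) ℝ) : mnorm A = ‖A.halfVec‖ := by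
  rw [mnorm, mpair_eq_two_mul_inner, real_inner_self_eq_norm_sq, ← mul_assoc,
    one_div_mul_cancel two_ne_zero, one_mul, Real.sqrt_sq (norm_nonneg _)]

theorem stmt_13 (D₁ D₂ : Matrix (Fin 3) (Fin 3) ℝ) :
    (mnorm D₂ + mnorm D₁) * (mnorm D₂ - mnorm D₁) ^ 2 ≤
      mpair (mnorm D₂ • D₂ - mnorm D₁ • D₁) (D₂ - D₁) ∧
    0 ≤ (mnorm D₂ + mnorm D₁) * (mnorm D₂ - mnorm D₁) ^ 2 := by
  have hnonneg : 0 ≤ (mnorm D₂ + mnorm D₁) * (mnorm D₂ - mnorm D₁) ^ 2 := by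
    simp only [mnorm_eq_norm_halfVec]
    positivity
  have hmono := real_inner_norm_smul_sub_norm_smul_sub_ge D₁.halfVec D₂.halfVec
  rw [← mnorm_eq_norm_halfVec, ← mnorm_eq_norm_halfVec, ← halfVec_smul, ← halfVec_smul,
    ← halfVec_sub, ← halfVec_sub] at hmono
  rw [mpair_eq_two_mul_inner]
  exact ⟨by linarith, hnonneg⟩
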